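/- Assuming Tverberg's theorem (every set of (d+1)(m-1)+1 points in ℝ^d has a Tverberg m-partition), every finite set P ⊂ ℝ^d admits a t-tolerant Tverberg m-partition with m = ⌈⌊|P|/(t+1)⌋/(d+1)⌉, provided |P| ≥ t+1. -/

import Mathlib

/-!
Split `P` into `t + 1` disjoint blocks of `(d + 1)(m - 1) + 1` points each (possible because
`m = ⌈⌊|P|/(t+1)⌋/(d+1)⌉`) and take a Tverberg `m`-partition of every block. Uniting the `i`-th
parts of all blocks gives an `m`-partition of the covered points; a set `R` of at most `t`
points misses one block entirely, so the Tverberg point of that block lies in the convex hulls of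
all parts after removing `R`. The uncovered points of `P` can be thrown into any one part.
-/

open Finset Function

lemma exists_pairwiseDisjoint_subsets_card_eq {α : Type*} {k c : ℕ} {P : Finset α}
    (h : k * c ≤ #P) :
    ∃ S : Fin k → Finset α, (∀ j, S j ⊆ P) ∧ (∀ j, #(S j) = c) ∧ Pairwise (Disjoint on S) := by
  obtain ⟨f⟩ : Nonempty (Fin k × Fin c ↪ P) :=
    Embedding.nonempty_of_card_le (by simpa using h)
  let g : Fin k × Fin c ↪ α := f.trans (Embedding.subtype _)
  refine ⟨fun j => univ.map ((Embedding.sectR j (Fin c)).trans g), ?_, ?_, ?_⟩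
  · intro j a ha
    obtain ⟨i, -, rfl⟩ := mem_map.mp ha
    exact (f (j, i)).2
  · simp
  · intro j j' hjj'
    simp only [onFun, disjoint_left, mem_map, mem_univ, true_and]
    rintro _ ⟨i, rfl⟩ ⟨i', hii'⟩
    exact hjj' (congrArg Prod.fst (g.injective hii')).symm

section Partition

variable {α ι κ : Type*} [DecidableEq α] [Fintype ι]

structure IsIndexedPartition (P : Finset α) (T : ι → Finset α) : Prop where
  pairwise_disjoint : Pairwise (Disjoint on T)
  biUnion_eq : univ.biUnion T = P

lemma IsIndexedPartition.subset {P : Finset α} {T : ι → Finset α} (h : IsIndexedPartition P T)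
    (i : ι) : T i ⊆ P :=
  h.biUnion_eq ▸ subset_biUnion_of_mem T (mem_univ i)

lemma IsIndexedPartition.biUnion [Fintype κ] {S : κ → Finset α} {T : κ → ι → Finset α}
    (hS : Pairwise (Disjoint on S)) (hT : ∀ j, IsIndexedPartition (S j) (T j)) :
    IsIndexedPartition (univ.biUnion S) fun i => univ.biUnion (T · i) where
  pairwise_disjoint i i' hii' := by
    simp only [onFun, disjoint_biUnion_left, disjoint_biUnion_right]
    intro j' _ j _
    obtain rfl | hjj' := eq_or_ne j j'
    · exact (hT j).pairwise_disjoint hii'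
    · exact (hS hjj').mono ((hT j).subset i) ((hT j').subset i')
  biUnion_eq := by
    ext a
    simp only [mem_biUnion, mem_univ, true_and, ← (hT _).biUnion_eq]
    exact exists_comm

lemma IsIndexedPartition.update_union [DecidableEq ι] {S L : Finset α} {T : ι → Finset α}
    (h : IsIndexedPartition S T) (hL : Disjoint S L) (i₀ : ι) :
    IsIndexedPartition (S ∪ L) (update T i₀ (T i₀ ∪ L)) where
  pairwise_disjoint i i' hii' := by
    have hLT : ∀ i, Disjoint L (T i) := fun i => hL.symm.mono_right (h.subset i)
    simp only [onFun, update_apply]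
    split_ifs with hi hi' hi'
    · exact absurd (hi.trans hi'.symm) hii'
    · exact disjoint_union_left.mpr ⟨hi ▸ h.pairwise_disjoint hii', hLT i'⟩
    · exact disjoint_union_right.mpr ⟨hi' ▸ h.pairwise_disjoint hii', (hLT i).symm⟩
    · exact h.pairwise_disjoint hii'
  biUnion_eq := by
    ext a
    simp only [mem_biUnion, mem_univ, true_and, mem_union, ← h.biUnion_eq, update_apply]
    constructor
    · rintro ⟨i, hi⟩
      split_ifs at hi with hi₀
      · exact (mem_union.mp hi).imp (⟨i₀, ·⟩) id
      · exact .inl ⟨i, hi⟩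
    · rintro (⟨i, hi⟩ | hi)
      · refine ⟨i, ?_⟩
        split_ifs with hi₀
        · exact mem_union_left L (hi₀ ▸ hi)
        · exact hi
      · exact ⟨i₀, by simp [hi]⟩

end Partition

section Tverberg

variable {𝕜 E ι κ : Type*} [Semiring 𝕜] [PartialOrder 𝕜] [AddCommMonoid E] [Module 𝕜 E]
  [DecidableEq E]

variable (𝕜) in
def IsTolerantTverberg (t : ℕ) (T : ι → Finset E) : Prop :=
  ∀ R : Finset E, #R ≤ t → ∃ x, ∀ i, x ∈ convexHull 𝕜 (↑(T i \ R) : Set E)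

lemma isTolerantTverberg_zero_iff {T : ι → Finset E} :
    IsTolerantTverberg 𝕜 0 T ↔ ∃ x, ∀ i, x ∈ convexHull 𝕜 (T i : Set E) := by
  refine ⟨fun h => by simpa using h ∅ le_rfl, fun h R hR => ?_⟩
  simpa [card_eq_zero.mp (Nat.le_zero.mp hR)] using h

lemma IsTolerantTverberg.mono {t : ℕ} {T T' : ι → Finset E} (h : IsTolerantTverberg 𝕜 t T)
    (hTT' : ∀ i, T i ⊆ T' i) : IsTolerantTverberg 𝕜 t T' := by
  intro R hR
  obtain ⟨x, hx⟩ := h R hR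
  exact ⟨x, fun i => convexHull_mono (coe_subset.mpr (sdiff_subset_sdiff (hTT' i) le_rfl)) (hx i)⟩

lemma IsTolerantTverberg.biUnion [Fintype κ] [Nonempty κ] {t : κ → ℕ} {S : κ → Finset E}
    {T : κ → ι → Finset E} (hS : Pairwise (Disjoint on S)) (hTS : ∀ j i, T j i ⊆ S j)
    (hT : ∀ j, IsTolerantTverberg 𝕜 (t j) (T j)) :
    IsTolerantTverberg 𝕜 (∑ j, t j + Fintype.card κ - 1) fun i => univ.biUnion (T · i) := by
  intro R hR
  have hsplit : ∑ j, #(R ∩ S j) ≤ #R := by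
    rw [← card_biUnion]
    · exact card_le_card (biUnion_subset.mpr fun j _ => inter_subset_left)
    · exact fun j _ j' _ hjj' => ((hS hjj').mono inter_subset_right inter_subset_right)
  have hlt : ∑ j, #(R ∩ S j) < ∑ j, (t j + 1) := by
    rw [sum_add_distrib]
    simp only [sum_const, card_univ, smul_eq_mul, mul_one]
    have := Fintype.card_pos (α := κ)
    omega
  -- pigeonhole: some `S j` loses at most `t j` points, so the common point of `T j` survives
  obtain ⟨j, -, hj⟩ := exists_lt_of_sum_lt hlt
  obtain ⟨x, hx⟩ := hT j (R ∩ S j) (Nat.lt_succ_iff.mp hj)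
  refine ⟨x, fun i => convexHull_mono ?_ (hx i)⟩
  intro a ha
  simp only [coe_sdiff, Set.mem_sdiff, mem_coe, mem_inter, not_and] at ha ⊢
  exact ⟨mem_biUnion.mpr ⟨j, mem_univ j, ha.1⟩, fun haR => ha.2 haR (hTS j i ha.1)⟩

end Tverberg

lemma mul_ceil_div_sub_one_add_one_le {q d : ℕ} (hq : 1 ≤ q) :
    (d + 1) * ((q + d) / (d + 1) - 1) + 1 ≤ q := by
  have hceil : (q + d) / (d + 1) = (q - 1) / (d + 1) + 1 := by
    rw [show q + d = q - 1 + (d + 1) by omega, Nat.add_div_right _ d.succ_pos]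
  have := Nat.mul_div_le (q - 1) (d + 1)
  rw [hceil, Nat.add_sub_cancel]
  omega

/-- Assuming Tverberg's theorem in `ℝ^d`, every finite `P ⊂ ℝ^d` with `|P| ≥ t+1`
admits a `t`-tolerant Tverberg `m`-partition with `m = ⌈⌊|P|/(t+1)⌋/(d+1)⌉`. -/
theorem stmt_11 (d t : ℕ)
    (hTv : ∀ m' : ℕ, 1 ≤ m' → ∀ S : Finset (Fin d → ℝ),
      S.card = (d + 1) * (m' - 1) + 1 →
      ∃ T : Fin m' → Finset (Fin d → ℝ),
        (∀ i j : Fin m', i ≠ j → Disjoint (T i) (T j)) ∧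
        Finset.univ.biUnion T = S ∧
        ∃ x : Fin d → ℝ, ∀ i : Fin m',
          x ∈ convexHull ℝ ((T i : Finset (Fin d → ℝ)) : Set (Fin d → ℝ)))
    (P : Finset (Fin d → ℝ)) (hP : t + 1 ≤ P.card) :
    ∃ T : Fin ((P.card / (t + 1) + d) / (d + 1)) → Finset (Fin d → ℝ),
      (∀ i j, i ≠ j → Disjoint (T i) (T j)) ∧
      Finset.univ.biUnion T = P ∧
      (∀ R ⊆ P, R.card ≤ t →
        ∃ x : Fin d → ℝ, ∀ i,
          x ∈ convexHull ℝ ((T i \ R : Finset (Fin d → ℝ)) : Set (Fin d → ℝ))) := by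
  set q := #P / (t + 1)
  set m := (q + d) / (d + 1)
  have hq : 1 ≤ q := (Nat.one_le_div_iff t.succ_pos).mpr hP
  have hm : 1 ≤ m := (Nat.one_le_div_iff d.succ_pos).mpr (by omega)
  have hcard : (t + 1) * ((d + 1) * (m - 1) + 1) ≤ #P :=
    (Nat.mul_le_mul_left _ (mul_ceil_div_sub_one_add_one_le hq)).trans (Nat.mul_div_le _ _)
  obtain ⟨S, hSP, hScard, hSdisj⟩ := exists_pairwiseDisjoint_subsets_card_eq hcard
  choose T hTdisj hTcover x hx using fun j => hTv m hm (S j) (hScard j)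
  have hTpart (j : Fin (t + 1)) : IsIndexedPartition (S j) (T j) := ⟨hTdisj j, hTcover j⟩
  have htol := IsTolerantTverberg.biUnion hSdisj (fun j => (hTpart j).subset)
    fun j => isTolerantTverberg_zero_iff.mpr ⟨x j, hx j⟩
  have hpart := (IsIndexedPartition.biUnion hSdisj hTpart).update_union (disjoint_sdiff (t := P)) ⟨0, hm⟩
  rw [union_sdiff_of_subset (biUnion_subset.mpr fun j _ => hSP j)] at hpart
  refine ⟨_, hpart.pairwise_disjoint, hpart.biUnion_eq, fun R _ hR => ?_⟩
  refine htol.mono (fun i => ?_) R (by simpa using hR)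
  rw [update_apply]
  split_ifs with hi
  · exact hi ▸ subset_union_left
  · rfl
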